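/- Finite-time blow-up in any prescribed interval of ℝ (Theorem 1.3, case d = 1). Let χ, μ > 0 and let I ⊂ ℝ be any nonempty open interval. Then there exist a finite time T* > 0 and smooth bounded initial data ρ₀, c₀ : ℝ → ℝ with ρ₀ ≥ β₁ > 0 and c₀ ≥ β₂ > 0 for some constants β₁, β₂, with every derivative of order k ≥ 1 of ρ₀ and c₀ square-integrable on ℝ, such that there is a classical solution (ρ, c) of the hyperbolic Keller–Segel system on ℝ × [0,T*) with this initial data satisfying sup_{0 ≤ t < T*} ( ‖ρ(·,t)‖_{L^∞(ℝ)} + ‖c(·,t)‖_{L^∞(ℝ)} + ‖∂ₓc(·,t)‖_{L^∞(ℝ)} + ‖∂ₓ log c(·,t)‖_{L^∞(ℝ)} ) < ∞, while ‖∂ₓρ(·,t)‖_{L^∞(I)} + ‖∂ₓₓc(·,t)‖_{L^∞(I)} tends to ∞ as t → T*. -/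

import Mathlib

open MeasureTheory Filter Topology ENNReal

/-- A classical solution of the one-dimensional hyperbolic Keller–Segel system of consumption
type `∂ₜρ = −χ ∂ₓ(ρ ∂ₓ log c)`, `∂ₜc = −μ c ρ` on `ℝ × J`:
`ρ(·,t)` is `C¹`, `c(·,t)` is `C²`, both are differentiable in `t` (encoded by the
`HasDerivWithinAt` statements, which also express the equations pointwise), and `c > 0`. -/
structure IsClassicalSolution1D (χ μ : ℝ) (ρ c : ℝ → ℝ → ℝ) (J : Set ℝ) : Prop where
  rho_space : ∀ t ∈ J, ContDiff ℝ 1 (fun x => ρ x t)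
  c_space : ∀ t ∈ J, ContDiff ℝ 2 (fun x => c x t)
  c_pos : ∀ (x : ℝ), ∀ t ∈ J, 0 < c x t
  rho_eq : ∀ (x : ℝ), ∀ t ∈ J,
    HasDerivWithinAt (fun s => ρ x s)
      (-χ * deriv (fun y => ρ y t * deriv (fun z => Real.log (c z t)) y) x) J t
  c_eq : ∀ (x : ℝ), ∀ t ∈ J,
    HasDerivWithinAt (fun s => c x s) (-μ * c x t * ρ x t) J t

open scoped ContDiff

/-!
Let `p` solve Burgers' equation `pₜ + p pₓ = 0` by characteristics: `p(x, t) = p₀(y)` where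
`x = y + t p₀(y)`, so that every function of `p` is transported. With `q(p) = p²/3 + 2√p/3`,
`w(p) = 2p/3 - 2/(3√p)` and `H' = w`, take `ρ = q(p)/(χμ)` and `c = exp(Λ/χ)`, where
`Λ(x, t) = W₀(y) + t H(p)` and `W₀' = w ∘ p₀`. Then `Λₓ = w(p)` and `Λₜ = H(p) - p w(p) = -q(p)`,
which is the `c`-equation, and the `ρ`-equation reduces to the identity `p q' = q' w + q w'`.

For `p₀ = 1 + (bump)` the characteristics issuing from the point of steepest descent of `p₀`
collide at `T = -1/min p₀'`, and there `ρₓ` blows up like `(T - t)⁻¹`, inside the support of the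
bump; meanwhile `1 ≤ p ≤ 2` keeps `ρ`, `c`, `cₓ = c w(p)/χ` and `(log c)ₓ = w(p)/χ` bounded.
-/

theorem HasDerivWithinAt.of_local_left_inverse {𝕜 : Type*} [NontriviallyNormedField 𝕜]
    {f g : 𝕜 → 𝕜} {f' a : 𝕜} {s t : Set 𝕜} (hg : Tendsto g (𝓝[s] a) (𝓝[t] (g a)))
    (hf : HasDerivWithinAt f f' t (g a)) (hf' : f' ≠ 0) (ha : a ∈ s)
    (hfg : ∀ᶠ y in 𝓝[s] a, f (g y) = y) : HasDerivWithinAt g f'⁻¹ s a :=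
  HasFDerivWithinAt.of_local_left_inverse
    (f' := ContinuousLinearEquiv.unitsEquivAut 𝕜 (Units.mk0 f' hf')) hg hf ha hfg

theorem HasCompactSupport.iteratedDeriv {𝕜 F : Type*} [NontriviallyNormedField 𝕜]
    [NormedAddCommGroup F] [NormedSpace 𝕜 F] {f : 𝕜 → F} (hf : HasCompactSupport f) (n : ℕ) :
    HasCompactSupport (iteratedDeriv n f) := by
  induction n with
  | zero => simpa
  | succ n ih => rw [iteratedDeriv_succ]; exact ih.deriv

theorem integrable_sq_iteratedDeriv_of_hasCompactSupport_deriv {f : ℝ → ℝ} (hf : ContDiff ℝ ∞ f)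
    (hf' : HasCompactSupport (deriv f)) {k : ℕ} (hk : 1 ≤ k) :
    Integrable fun x => iteratedDeriv k f x ^ 2 := by
  obtain ⟨j, rfl⟩ := Nat.exists_eq_add_of_le' hk
  have hc := hf.continuous_iteratedDeriv (j + 1) (by exact_mod_cast le_top)
  rw [iteratedDeriv_succ'] at hc ⊢
  refine (hc.pow 2).integrable_of_hasCompactSupport ((hf'.iteratedDeriv j).mono ?_)
  intro x hx h
  exact hx (by simp [h])

theorem ContDiffBump.exists_deriv_le {x₀ : ℝ} (f : ContDiffBump x₀) :
    ∃ y ∈ Metric.closedBall x₀ f.rOut, deriv f y ≤ -f.rOut⁻¹ ∧ ∀ z, deriv f y ≤ deriv f z := by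
  have hf : ContDiff ℝ ∞ f := f.contDiff
  obtain ⟨y, hy⟩ := (hf.continuous_deriv (by simp)).exists_forall_le_of_hasCompactSupport
    f.hasCompactSupport.deriv
  -- `f` falls from `1` to `0` over `[x₀, x₀ + rOut]`
  obtain ⟨ξ, -, hξ⟩ := exists_deriv_eq_slope f (by linarith [f.rOut_pos] : x₀ < x₀ + f.rOut)
    hf.continuous.continuousOn (hf.differentiable (by simp)).differentiableOn
  have hslope : deriv f y ≤ -f.rOut⁻¹ := by
    refine (hy ξ).trans_eq ?_
    rw [hξ, f.one_of_mem_closedBall (Metric.mem_closedBall_self f.rIn_pos.le),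
      f.zero_of_le_dist (by rw [Real.dist_eq, add_sub_cancel_left, abs_of_pos f.rOut_pos]),
      add_sub_cancel_left, zero_sub, neg_div, one_div]
  have hneg : deriv f y < 0 := hslope.trans_lt (neg_neg_of_pos (inv_pos.2 f.rOut_pos))
  refine ⟨y, ?_, hslope, hy⟩
  rw [← f.tsupport_eq]
  exact tsupport_deriv_subset (subset_tsupport _ hneg.ne)

namespace KellerSegel

noncomputable section

-- `p q' = (q w)'` together with the compatibility `q' = p w'` of `Λₓ = w`, `Λₜ = -q` force
-- `w = p - q/p` and `2 q' = p + q/p`, of which `q = p²/3 + 2√p/3` is a solution.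
def q (p : ℝ) : ℝ := p ^ 2 / 3 + 2 / 3 * √p
def w (p : ℝ) : ℝ := 2 / 3 * (p - (√p)⁻¹)
def H (p : ℝ) : ℝ := p ^ 2 / 3 - 4 / 3 * √p
def qDeriv (p : ℝ) : ℝ := 2 * p / 3 + (3 * √p)⁻¹
def wDeriv (p : ℝ) : ℝ := 2 / 3 + (3 * √p ^ 3)⁻¹

variable {p : ℝ}

lemma hasDerivAt_q (hp : 0 < p) : HasDerivAt q (qDeriv p) p := by
  have h := ((hasDerivAt_pow 2 p).div_const 3).add
    ((Real.hasDerivAt_sqrt hp.ne').const_mul (2 / 3))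
  refine h.congr_deriv ?_
  have := Real.sqrt_pos.2 hp
  rw [qDeriv]
  field_simp
  ring

lemma hasDerivAt_w (hp : 0 < p) : HasDerivAt w (wDeriv p) p := by
  have h := ((hasDerivAt_id p).sub
    ((Real.hasDerivAt_sqrt hp.ne').inv (Real.sqrt_pos.2 hp).ne')).const_mul (2 / 3 : ℝ)
  refine h.congr_deriv ?_
  obtain ⟨s, hs, rfl⟩ : ∃ s, 0 < s ∧ s ^ 2 = p := ⟨√p, Real.sqrt_pos.2 hp, Real.sq_sqrt hp.le⟩
  simp only [wDeriv, Real.sqrt_sq hs.le]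
  field_simp
  ring

lemma hasDerivAt_H (hp : 0 < p) : HasDerivAt H (w p) p := by
  have h := ((hasDerivAt_pow 2 p).div_const 3).sub
    ((Real.hasDerivAt_sqrt hp.ne').const_mul (4 / 3))
  refine h.congr_deriv ?_
  obtain ⟨s, hs, rfl⟩ : ∃ s, 0 < s ∧ s ^ 2 = p := ⟨√p, Real.sqrt_pos.2 hp, Real.sq_sqrt hp.le⟩
  simp only [w, Real.sqrt_sq hs.le]
  field_simp
  ring

lemma mul_qDeriv_eq (hp : 0 < p) : p * qDeriv p = qDeriv p * w p + q p * wDeriv p := by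
  obtain ⟨s, hs, rfl⟩ : ∃ s, 0 < s ∧ s ^ 2 = p := ⟨√p, Real.sqrt_pos.2 hp, Real.sq_sqrt hp.le⟩
  simp only [q, w, qDeriv, wDeriv, Real.sqrt_sq hs.le]
  field_simp
  ring

lemma H_sub_mul_w (hp : 0 < p) : H p - p * w p = -q p := by
  obtain ⟨s, hs, rfl⟩ : ∃ s, 0 < s ∧ s ^ 2 = p := ⟨√p, Real.sqrt_pos.2 hp, Real.sq_sqrt hp.le⟩
  simp only [q, w, H, Real.sqrt_sq hs.le]
  field_simp
  ring

lemma qDeriv_pos (hp : 0 < p) : 0 < qDeriv p := by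
  unfold qDeriv; have := Real.sqrt_pos.2 hp; positivity

lemma w_one : w 1 = 0 := by simp [w]

lemma one_le_sqrt_le_two (h₁ : 1 ≤ p) (h₂ : p ≤ 2) : 1 ≤ √p ∧ √p ≤ 2 := by
  refine ⟨Real.one_le_sqrt.2 h₁, ?_⟩
  rw [Real.sqrt_le_left (by norm_num)]
  linarith

lemma one_le_q (h₁ : 1 ≤ p) : 1 ≤ q p := by
  have := Real.one_le_sqrt.2 h₁; unfold q; nlinarith

lemma q_le (h₁ : 1 ≤ p) (h₂ : p ≤ 2) : q p ≤ 8 / 3 := by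
  have := (one_le_sqrt_le_two h₁ h₂).2; unfold q; nlinarith

lemma abs_w_le (h₁ : 1 ≤ p) (h₂ : p ≤ 2) : |w p| ≤ 2 := by
  obtain ⟨hs₁, hs₂⟩ := one_le_sqrt_le_two h₁ h₂
  have : (√p)⁻¹ ≤ 1 := inv_le_one_of_one_le₀ hs₁
  have : 0 < (√p)⁻¹ := by positivity
  unfold w; rw [abs_le]; constructor <;> nlinarith

lemma abs_H_le (h₁ : 1 ≤ p) (h₂ : p ≤ 2) : |H p| ≤ 4 := by
  obtain ⟨hs₁, hs₂⟩ := one_le_sqrt_le_two h₁ h₂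
  unfold H; rw [abs_le]; constructor <;> nlinarith

lemma contDiffAt_q (hp : 0 < p) : ContDiffAt ℝ ∞ q p :=
  ((contDiffAt_id.pow 2).div_const 3).add
    (contDiffAt_const.mul (Real.contDiffAt_sqrt hp.ne'))

lemma contDiffAt_w (hp : 0 < p) : ContDiffAt ℝ ∞ w p :=
  contDiffAt_const.mul (contDiffAt_id.sub
    ((Real.contDiffAt_sqrt hp.ne').inv (Real.sqrt_pos.2 hp).ne'))

structure BurgersData where
  p₀ : ℝ → ℝ
  y₀ : ℝ
  contDiff : ContDiff ℝ ∞ p₀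
  one_le : ∀ y, 1 ≤ p₀ y
  le_two : ∀ y, p₀ y ≤ 2
  hasCompactSupport : HasCompactSupport fun y => p₀ y - 1
  deriv_le : ∀ y, deriv p₀ y₀ ≤ deriv p₀ y
  deriv_neg : deriv p₀ y₀ < 0

namespace BurgersData

variable (S : BurgersData) {s t : ℝ}

def m : ℝ := deriv S.p₀ S.y₀

def T : ℝ := -S.m⁻¹

lemma T_pos : 0 < S.T := neg_pos.2 (inv_lt_zero.2 S.deriv_neg)

lemma T_le {L : ℝ} (hL : 0 < L) (h : deriv S.p₀ S.y₀ ≤ -L⁻¹) : S.T ≤ L := by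
  calc S.T = (-S.m)⁻¹ := inv_neg.symm
    _ ≤ L⁻¹⁻¹ := inv_anti₀ (inv_pos.2 hL) (le_neg.1 h)
    _ = L := inv_inv L

lemma one_add_mul_m (t : ℝ) : 1 + t * S.m = -S.m * (S.T - t) := by
  have : S.m ≠ 0 := S.deriv_neg.ne
  rw [T]; field_simp; ring

lemma one_add_mul_m_pos (ht : t ∈ Set.Ico 0 S.T) : 0 < 1 + t * S.m := by
  rw [one_add_mul_m]; exact mul_pos (neg_pos.2 S.deriv_neg) (sub_pos.2 ht.2)

lemma one_add_mul_deriv_pos (ht : t ∈ Set.Ico 0 S.T) (y : ℝ) : 0 < 1 + t * deriv S.p₀ y :=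
  (S.one_add_mul_m_pos ht).trans_le (by gcongr; exacts [ht.1, S.deriv_le y])

lemma p₀_pos (y : ℝ) : 0 < S.p₀ y := by linarith [S.one_le y]

lemma differentiable : Differentiable ℝ S.p₀ := S.contDiff.differentiable (by simp)

lemma continuous_deriv : Continuous (deriv S.p₀) := S.contDiff.continuous_deriv (by simp)

def char (t y : ℝ) : ℝ := y + t * S.p₀ y

def foot (x t : ℝ) : ℝ := Function.invFun (S.char t) x

lemma hasDerivAt_char (t y : ℝ) : HasDerivAt (S.char t) (1 + t * deriv S.p₀ y) y :=
  (hasDerivAt_id y).add ((S.differentiable y).hasDerivAt.const_mul t)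

lemma mul_abs_sub_le_abs_char_sub (ht : t ∈ Set.Ico 0 S.T) (a b : ℝ) :
    (1 + t * S.m) * |b - a| ≤ |S.char t b - S.char t a| := by
  have hd (y : ℝ) : HasDerivAt (fun y => S.char t y - (1 + t * S.m) * y)
      (t * (deriv S.p₀ y - S.m)) y :=
    ((S.hasDerivAt_char t y).sub ((hasDerivAt_id y).const_mul (1 + t * S.m))).congr_deriv
      (by ring)
  have hmono : Monotone fun y => S.char t y - (1 + t * S.m) * y :=
    monotone_of_deriv_nonneg (fun y => (hd y).differentiableAt) fun y => by
      rw [(hd y).deriv]; exact mul_nonneg ht.1 (sub_nonneg.2 (S.deriv_le y))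
  have hpos := S.one_add_mul_m_pos ht
  rcases le_total a b with hab | hab
  · have := hmono hab
    rw [abs_of_nonneg (sub_nonneg.2 hab), abs_of_nonneg (by nlinarith)]
    linarith
  · have := hmono hab
    rw [abs_of_nonpos (sub_nonpos.2 hab), abs_of_nonpos (by nlinarith)]
    linarith

lemma char_y₀_mem_Icc (ht : t ∈ Set.Ico 0 S.T) :
    S.char t S.y₀ ∈ Set.Icc S.y₀ (S.y₀ + 2 * S.T) := by
  have := S.one_le S.y₀; have := S.le_two S.y₀
  constructor <;> unfold char <;> nlinarith [ht.1, ht.2]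

lemma char_strictMono (ht : t ∈ Set.Ico 0 S.T) : StrictMono (S.char t) :=
  strictMono_of_deriv_pos fun y => by
    rw [(S.hasDerivAt_char t y).deriv]; exact S.one_add_mul_deriv_pos ht y

lemma char_surjective (ht : 0 ≤ t) : Function.Surjective (S.char t) := by
  have hle (y : ℝ) : y ≤ S.char t y :=
    le_add_of_nonneg_right (mul_nonneg ht (S.p₀_pos y).le)
  have hge (y : ℝ) : S.char t y ≤ y + 2 * t := by
    unfold char; nlinarith [S.le_two y]
  have hd : Differentiable ℝ (S.char t) := fun y => (S.hasDerivAt_char t y).differentiableAt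
  exact Continuous.surjective hd.continuous
    (tendsto_atTop_mono hle tendsto_id)
    (tendsto_atBot_mono hge (tendsto_atBot_add_const_right _ _ tendsto_id))

lemma char_foot (ht : 0 ≤ t) (x : ℝ) : S.char t (S.foot x t) = x :=
  Function.invFun_eq (S.char_surjective ht x)

lemma foot_char (ht : t ∈ Set.Ico 0 S.T) (y : ℝ) : S.foot (S.char t y) t = y :=
  Function.leftInverse_invFun (S.char_strictMono ht).injective y

lemma zero_mem : (0 : ℝ) ∈ Set.Ico 0 S.T := ⟨le_rfl, S.T_pos⟩

lemma foot_zero (x : ℝ) : S.foot x 0 = x := by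
  simpa [char] using S.foot_char S.zero_mem x

lemma continuous_foot (ht : t ∈ Set.Ico 0 S.T) : Continuous fun x => S.foot x t :=
  Monotone.continuous_of_surjective
    (fun x x' h => (S.char_strictMono ht).le_iff_le.1 (by rwa [S.char_foot ht.1, S.char_foot ht.1]))
    fun y => ⟨S.char t y, S.foot_char ht y⟩

lemma mul_abs_foot_sub_foot_le (hs : s ∈ Set.Ico 0 S.T) (ht : t ∈ Set.Ico 0 S.T) (x : ℝ) :
    (1 + s * S.m) * |S.foot x s - S.foot x t| ≤ 2 * |s - t| := by
  have h := S.mul_abs_sub_le_abs_char_sub hs (S.foot x t) (S.foot x s)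
  have hdiff : S.char s (S.foot x s) - S.char s (S.foot x t) = (t - s) * S.p₀ (S.foot x t) := by
    have h' := S.char_foot ht.1 x
    rw [S.char_foot hs.1]; unfold char at h' ⊢; linear_combination -h'
  rw [hdiff, abs_mul, abs_sub_comm t, abs_of_pos (S.p₀_pos (S.foot x t))] at h
  nlinarith [S.le_two (S.foot x t), abs_nonneg (s - t)]

lemma continuousWithinAt_foot_time (ht : t ∈ Set.Ico 0 S.T) (x : ℝ) :
    ContinuousWithinAt (fun s => S.foot x s) (Set.Ico 0 S.T) t := by
  have hbound : ContinuousAt (fun s => 2 * |s - t| / (1 + s * S.m)) t :=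
    ContinuousAt.div (by fun_prop) (by fun_prop) (S.one_add_mul_m_pos ht).ne'
  refine tendsto_iff_dist_tendsto_zero.2 (squeeze_zero' (Eventually.of_forall fun _ => dist_nonneg)
    ?_ (by simpa using hbound.tendsto.mono_left nhdsWithin_le_nhds))
  filter_upwards [self_mem_nhdsWithin] with s hs
  rw [Real.dist_eq, le_div_iff₀ (S.one_add_mul_m_pos hs), mul_comm]
  exact S.mul_abs_foot_sub_foot_le hs ht x

def footDeriv (x t : ℝ) : ℝ := (1 + t * deriv S.p₀ (S.foot x t))⁻¹

lemma hasDerivAt_foot (ht : t ∈ Set.Ico 0 S.T) (x : ℝ) :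
    HasDerivAt (fun x => S.foot x t) (S.footDeriv x t) x :=
  HasDerivAt.of_local_left_inverse (S.continuous_foot ht).continuousAt (S.hasDerivAt_char t _)
    (S.one_add_mul_deriv_pos ht _).ne' (Eventually.of_forall (S.char_foot ht.1))

lemma hasDerivWithinAt_foot_time (ht : t ∈ Set.Ico 0 S.T) (x : ℝ) :
    HasDerivWithinAt (fun s => S.foot x s) (-S.p₀ (S.foot x t) * S.footDeriv x t)
      (Set.Ico 0 S.T) t := by
  have hp (s : ℝ) : 0 < S.p₀ (S.foot x s) := S.p₀_pos _
  have hxy : x - S.foot x t = t * S.p₀ (S.foot x t) := by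
    have := S.char_foot ht.1 x; unfold char at this; linarith
  have hD := S.one_add_mul_deriv_pos ht (S.foot x t)
  -- the time at which the characteristic from `y` reaches `x` is a left inverse of `foot x`
  have hτ : HasDerivAt (fun y => (x - y) / S.p₀ y)
      (-(1 + t * deriv S.p₀ (S.foot x t)) / S.p₀ (S.foot x t)) (S.foot x t) := by
    refine (((hasDerivAt_id _).const_sub x).div (S.differentiable _).hasDerivAt
      (hp t).ne').congr_deriv ?_
    rw [id, hxy]; field_simp; ring
  have hleft : ∀ᶠ s in 𝓝[Set.Ico 0 S.T] t, (x - S.foot x s) / S.p₀ (S.foot x s) = s := by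
    filter_upwards [self_mem_nhdsWithin] with s hs
    have := S.char_foot hs.1 x
    unfold char at this
    rw [div_eq_iff (hp s).ne']; linarith
  refine (hτ.hasDerivWithinAt.of_local_left_inverse (t := Set.univ)
    (by rw [nhdsWithin_univ]; exact S.continuousWithinAt_foot_time ht x)
    (div_ne_zero (neg_ne_zero.2 hD.ne') (hp t).ne') ht hleft).congr_deriv ?_
  unfold footDeriv
  rw [inv_div, div_neg, div_eq_mul_inv, neg_mul]

variable {x : ℝ} {F : ℝ → ℝ} {F' : ℝ}

lemma hasDerivAt_comp_foot (ht : t ∈ Set.Ico 0 S.T) (hF : HasDerivAt F F' (S.foot x t)) :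
    HasDerivAt (fun x => F (S.foot x t)) (F' * S.footDeriv x t) x :=
  hF.comp x (S.hasDerivAt_foot ht x)

lemma hasDerivWithinAt_comp_foot_time (ht : t ∈ Set.Ico 0 S.T)
    (hF : HasDerivAt F F' (S.foot x t)) :
    HasDerivWithinAt (fun s => F (S.foot x s)) (-S.p₀ (S.foot x t) * (F' * S.footDeriv x t))
      (Set.Ico 0 S.T) t :=
  (hF.comp_hasDerivWithinAt t (S.hasDerivWithinAt_foot_time ht x)).congr_deriv (by ring)

lemma contDiff_foot (ht : t ∈ Set.Ico 0 S.T) : ContDiff ℝ 1 fun x => S.foot x t := by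
  refine contDiff_one_iff_deriv.2 ⟨fun x => (S.hasDerivAt_foot ht x).differentiableAt, ?_⟩
  rw [funext fun x => (S.hasDerivAt_foot ht x).deriv]
  exact (continuous_const.add (continuous_const.mul (S.continuous_deriv.comp
    (S.continuous_foot ht)))).inv₀ fun x => (S.one_add_mul_deriv_pos ht _).ne'

lemma contDiff_q_comp : ContDiff ℝ ∞ fun y => q (S.p₀ y) :=
  contDiff_iff_contDiffAt.2 fun y => (contDiffAt_q (S.p₀_pos y)).comp y S.contDiff.contDiffAt

lemma contDiff_w_comp : ContDiff ℝ ∞ fun y => w (S.p₀ y) :=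
  contDiff_iff_contDiffAt.2 fun y => (contDiffAt_w (S.p₀_pos y)).comp y S.contDiff.contDiffAt

lemma hasCompactSupport_w_comp : HasCompactSupport fun y => w (S.p₀ y) :=
  S.hasCompactSupport.mono fun y hy h => hy (by simp only at h ⊢; rw [sub_eq_zero.1 h, w_one])

lemma integrable_w_comp : Integrable fun y => w (S.p₀ y) :=
  S.contDiff_w_comp.continuous.integrable_of_hasCompactSupport S.hasCompactSupport_w_comp

def W₀ (y : ℝ) : ℝ := ∫ z in (0 : ℝ)..y, w (S.p₀ z)

lemma hasDerivAt_W₀ (y : ℝ) : HasDerivAt S.W₀ (w (S.p₀ y)) y :=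
  intervalIntegral.integral_hasDerivAt_right (S.contDiff_w_comp.continuous.intervalIntegrable _ _)
    (S.contDiff_w_comp.continuous.stronglyMeasurableAtFilter _ _)
    S.contDiff_w_comp.continuous.continuousAt

lemma contDiff_W₀ : ContDiff ℝ ∞ S.W₀ :=
  contDiff_infty_iff_deriv.2 ⟨fun y => (S.hasDerivAt_W₀ y).differentiableAt,
    by rw [funext fun y => (S.hasDerivAt_W₀ y).deriv]; exact S.contDiff_w_comp⟩

lemma abs_W₀_le (y : ℝ) : |S.W₀ y| ≤ ∫ z, |w (S.p₀ z)| :=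
  (intervalIntegral.norm_integral_le_integral_norm_uIoc).trans
    (setIntegral_le_integral S.integrable_w_comp.norm (Eventually.of_forall fun _ => norm_nonneg _))

def Λ (x t : ℝ) : ℝ := S.W₀ (S.foot x t) + t * H (S.p₀ (S.foot x t))

lemma hasDerivAt_Λ (ht : t ∈ Set.Ico 0 S.T) (x : ℝ) :
    HasDerivAt (fun x => S.Λ x t) (w (S.p₀ (S.foot x t))) x := by
  have hF : HasDerivAt (fun y => S.W₀ y + t * H (S.p₀ y))
      (w (S.p₀ (S.foot x t)) * (1 + t * deriv S.p₀ (S.foot x t))) (S.foot x t) :=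
    ((S.hasDerivAt_W₀ _).add (((hasDerivAt_H (S.p₀_pos _)).comp _
      (S.differentiable _).hasDerivAt).const_mul t)).congr_deriv (by ring)
  refine (S.hasDerivAt_comp_foot ht hF).congr_deriv ?_
  have hD := S.one_add_mul_deriv_pos ht (S.foot x t)
  unfold footDeriv; field_simp

lemma hasDerivWithinAt_Λ_time (ht : t ∈ Set.Ico 0 S.T) (x : ℝ) :
    HasDerivWithinAt (fun s => S.Λ x s) (-q (S.p₀ (S.foot x t))) (Set.Ico 0 S.T) t := by
  have hp := S.p₀_pos (S.foot x t)
  have hH := (hasDerivAt_H hp).comp _ (S.differentiable (S.foot x t)).hasDerivAt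
  refine ((S.hasDerivWithinAt_comp_foot_time ht (S.hasDerivAt_W₀ _)).add
    ((hasDerivWithinAt_id t _).mul (S.hasDerivWithinAt_comp_foot_time ht hH))).congr_deriv ?_
  have hD := S.one_add_mul_deriv_pos ht (S.foot x t)
  unfold footDeriv; simp only [id, Function.comp]; field_simp
  linear_combination (1 + t * deriv S.p₀ (S.foot x t)) * H_sub_mul_w hp

lemma contDiff_Λ (ht : t ∈ Set.Ico 0 S.T) : ContDiff ℝ 2 fun x => S.Λ x t := by
  rw [show (2 : WithTop ℕ∞) = 1 + 1 by norm_num]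
  refine contDiff_succ_iff_deriv.2 ⟨fun x => (S.hasDerivAt_Λ ht x).differentiableAt, by simp, ?_⟩
  rw [funext fun x => (S.hasDerivAt_Λ ht x).deriv]
  exact (S.contDiff_w_comp.of_le (by simp)).comp (S.contDiff_foot ht)

variable (χ μ : ℝ)

def ρ₀ (y : ℝ) : ℝ := q (S.p₀ y) / (χ * μ)

def c₀ (y : ℝ) : ℝ := Real.exp (S.W₀ y / χ)

def ρ (x t : ℝ) : ℝ := S.ρ₀ χ μ (S.foot x t)

def c (x t : ℝ) : ℝ := Real.exp (S.Λ x t / χ)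

variable {χ μ}

lemma ρ_zero (x : ℝ) : S.ρ χ μ x 0 = S.ρ₀ χ μ x := by rw [ρ, foot_zero]

lemma c_zero (x : ℝ) : S.c χ x 0 = S.c₀ χ x := by simp [c, c₀, Λ, foot_zero]

lemma contDiff_ρ₀ : ContDiff ℝ ∞ (S.ρ₀ χ μ) := S.contDiff_q_comp.div_const _

lemma contDiff_c₀ : ContDiff ℝ ∞ (S.c₀ χ) := Real.contDiff_exp.comp (S.contDiff_W₀.div_const _)

lemma hasDerivAt_ρ₀ (y : ℝ) :
    HasDerivAt (S.ρ₀ χ μ) (qDeriv (S.p₀ y) * deriv S.p₀ y / (χ * μ)) y :=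
  ((hasDerivAt_q (S.p₀_pos y)).comp y (S.differentiable y).hasDerivAt).div_const _

lemma hasDerivAt_c₀ (y : ℝ) : HasDerivAt (S.c₀ χ) (S.c₀ χ y * (w (S.p₀ y) / χ)) y :=
  ((S.hasDerivAt_W₀ y).div_const χ).exp

lemma hasDerivAt_c (ht : t ∈ Set.Ico 0 S.T) (x : ℝ) :
    HasDerivAt (fun x => S.c χ x t) (S.c χ x t * (w (S.p₀ (S.foot x t)) / χ)) x :=
  ((S.hasDerivAt_Λ ht x).div_const χ).exp

lemma deriv_log_c (ht : t ∈ Set.Ico 0 S.T) (x : ℝ) :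
    deriv (fun y => Real.log (S.c χ y t)) x = w (S.p₀ (S.foot x t)) / χ := by
  simp only [c, Real.log_exp]
  exact ((S.hasDerivAt_Λ ht x).div_const χ).deriv

lemma hasDerivWithinAt_ρ_time (hχ : χ ≠ 0) (hμ : μ ≠ 0) (ht : t ∈ Set.Ico 0 S.T) (x : ℝ) :
    HasDerivWithinAt (fun s => S.ρ χ μ x s)
      (-χ * deriv (fun y => S.ρ χ μ y t * deriv (fun z => Real.log (S.c χ z t)) y) x)
      (Set.Ico 0 S.T) t := by
  have hp := S.p₀_pos (S.foot x t)
  have hflux : HasDerivAt (fun y => S.ρ χ μ y t * deriv (fun z => Real.log (S.c χ z t)) y)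
      ((qDeriv (S.p₀ (S.foot x t)) * w (S.p₀ (S.foot x t)) + q (S.p₀ (S.foot x t)) *
        wDeriv (S.p₀ (S.foot x t))) * deriv S.p₀ (S.foot x t) / (χ * μ * χ) *
          S.footDeriv x t) x := by
    simp only [funext (S.deriv_log_c ht), ρ, ρ₀, div_mul_div_comm]
    exact S.hasDerivAt_comp_foot ht ((((hasDerivAt_q hp).mul (hasDerivAt_w hp)).comp _
      (S.differentiable _).hasDerivAt).div_const _)
  refine (S.hasDerivWithinAt_comp_foot_time ht (S.hasDerivAt_ρ₀ _)).congr_deriv ?_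
  rw [hflux.deriv, ← mul_qDeriv_eq hp]
  field_simp

lemma hasDerivWithinAt_c_time (hχ : χ ≠ 0) (hμ : μ ≠ 0) (ht : t ∈ Set.Ico 0 S.T) (x : ℝ) :
    HasDerivWithinAt (fun s => S.c χ x s) (-μ * S.c χ x t * S.ρ χ μ x t) (Set.Ico 0 S.T) t :=
  ((S.hasDerivWithinAt_Λ_time ht x).div_const χ).exp.congr_deriv (by
    simp only [c, ρ, ρ₀]; field_simp)

lemma isClassicalSolution1D (hχ : χ ≠ 0) (hμ : μ ≠ 0) :
    IsClassicalSolution1D χ μ (S.ρ χ μ) (S.c χ) (Set.Ico 0 S.T) where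
  rho_space _ ht := (S.contDiff_ρ₀.of_le (by simp)).comp (S.contDiff_foot ht)
  c_space _ ht := Real.contDiff_exp.comp ((S.contDiff_Λ ht).div_const χ)
  c_pos _ _ _ := Real.exp_pos _
  rho_eq x _ ht := S.hasDerivWithinAt_ρ_time hχ hμ ht x
  c_eq x _ ht := S.hasDerivWithinAt_c_time hχ hμ ht x

lemma one_div_le_ρ₀ (hχμ : 0 < χ * μ) (y : ℝ) : 1 / (χ * μ) ≤ S.ρ₀ χ μ y :=
  div_le_div_of_nonneg_right (one_le_q (S.one_le y)) hχμ.le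

lemma abs_ρ₀_le (hχμ : 0 < χ * μ) (y : ℝ) : |S.ρ₀ χ μ y| ≤ 8 / 3 / (χ * μ) := by
  rw [abs_of_pos ((one_div_pos.2 hχμ).trans_le (S.one_div_le_ρ₀ hχμ y))]
  exact div_le_div_of_nonneg_right (q_le (S.one_le y) (S.le_two y)) hχμ.le

lemma exp_neg_le_c₀ (hχ : 0 < χ) (y : ℝ) :
    Real.exp (-(∫ z, |w (S.p₀ z)|) / χ) ≤ S.c₀ χ y :=
  Real.exp_le_exp.2 (div_le_div_of_nonneg_right (neg_le_of_abs_le (S.abs_W₀_le y)) hχ.le)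

lemma abs_Λ_le (ht : t ∈ Set.Ico 0 S.T) (x : ℝ) :
    |S.Λ x t| ≤ (∫ z, |w (S.p₀ z)|) + S.T * 4 := by
  have hH := abs_H_le (S.one_le (S.foot x t)) (S.le_two (S.foot x t))
  calc |S.Λ x t| ≤ |S.W₀ (S.foot x t)| + |t * H (S.p₀ (S.foot x t))| := abs_add_le _ _
    _ = |S.W₀ (S.foot x t)| + t * |H (S.p₀ (S.foot x t))| := by rw [abs_mul, abs_of_nonneg ht.1]
    _ ≤ _ := add_le_add (S.abs_W₀_le _) (mul_le_mul ht.2.le hH (abs_nonneg _) S.T_pos.le)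

lemma exists_bound (hχ : 0 < χ) (hμ : 0 < μ) : ∃ M, ∀ x, ∀ t ∈ Set.Ico 0 S.T,
    |S.ρ χ μ x t| + |S.c χ x t| + |deriv (fun y => S.c χ y t) x| +
      |deriv (fun y => Real.log (S.c χ y t)) x| ≤ M := by
  set C := Real.exp (((∫ z, |w (S.p₀ z)|) + S.T * 4) / χ)
  refine ⟨8 / 3 / (χ * μ) + C + C * (2 / χ) + 2 / χ, fun x t ht => ?_⟩
  have hc : |S.c χ x t| ≤ C := by
    rw [c, Real.abs_exp]
    exact Real.exp_le_exp.2
      (div_le_div_of_nonneg_right ((le_abs_self _).trans (S.abs_Λ_le ht x)) hχ.le)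
  have hw : |w (S.p₀ (S.foot x t)) / χ| ≤ 2 / χ := by
    rw [abs_div, abs_of_pos hχ]
    exact div_le_div_of_nonneg_right (abs_w_le (S.one_le _) (S.le_two _)) hχ.le
  have hρ := S.abs_ρ₀_le (mul_pos hχ hμ) (S.foot x t)
  have hcw := mul_le_mul hc hw (abs_nonneg _) ((abs_nonneg _).trans hc)
  rw [(S.hasDerivAt_c ht x).deriv, S.deriv_log_c ht, abs_mul]
  unfold ρ
  linarith

lemma exists_bound_initial (hχ : 0 < χ) (hμ : 0 < μ) :
    ∃ M, ∀ x, |S.ρ₀ χ μ x| ≤ M ∧ |S.c₀ χ x| ≤ M := by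
  obtain ⟨M, hM⟩ := S.exists_bound hχ hμ
  refine ⟨M, fun x => ?_⟩
  have h := hM x 0 S.zero_mem
  rw [S.ρ_zero, S.c_zero] at h
  constructor <;> linarith [abs_nonneg (S.ρ₀ χ μ x), abs_nonneg (S.c₀ χ x),
    abs_nonneg (deriv (fun y => S.c χ y 0) x), abs_nonneg (deriv (fun y => Real.log (S.c χ y 0)) x)]

lemma hasCompactSupport_deriv : HasCompactSupport (deriv S.p₀) := by
  have : deriv (fun y => S.p₀ y - 1) = deriv S.p₀ := funext fun _ => deriv_sub_const 1
  exact this ▸ S.hasCompactSupport.deriv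

lemma hasCompactSupport_deriv_ρ₀ : HasCompactSupport (deriv (S.ρ₀ χ μ)) :=
  S.hasCompactSupport_deriv.mono fun y hy h => hy (by rw [(S.hasDerivAt_ρ₀ y).deriv, h]; simp)

lemma hasCompactSupport_deriv_c₀ : HasCompactSupport (deriv (S.c₀ χ)) :=
  S.hasCompactSupport_w_comp.mono fun y hy h => hy (by
    rw [(S.hasDerivAt_c₀ y).deriv]; simp only at h; simp [h])

lemma abs_deriv_ρ_char (ht : t ∈ Set.Ico 0 S.T) :
    |deriv (fun y => S.ρ χ μ y t) (S.char t S.y₀)| =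
      qDeriv (S.p₀ S.y₀) / |χ * μ| * (S.T - t)⁻¹ := by
  have hd := S.hasDerivAt_comp_foot ht
    (S.hasDerivAt_ρ₀ (χ := χ) (μ := μ) (S.foot (S.char t S.y₀) t))
  have hm : S.m ≠ 0 := S.deriv_neg.ne
  have hTt : 0 < S.T - t := sub_pos.2 ht.2
  have hval : deriv (fun y => S.ρ χ μ y t) (S.char t S.y₀) =
      -(qDeriv (S.p₀ S.y₀) / (χ * μ) * (S.T - t)⁻¹) := by
    rw [show (fun y => S.ρ χ μ y t) = fun y => S.ρ₀ χ μ (S.foot y t) from rfl, hd.deriv,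
      footDeriv, S.foot_char ht, ← m, one_add_mul_m]
    field_simp
  rw [hval, abs_neg, abs_mul, abs_div, abs_of_pos (qDeriv_pos (S.p₀_pos _)),
    abs_of_pos (inv_pos.2 hTt)]

lemma tendsto_abs_deriv_ρ (hχ : χ ≠ 0) (hμ : μ ≠ 0) :
    Tendsto (fun t => |deriv (fun y => S.ρ χ μ y t) (S.char t S.y₀)|) (𝓝[<] S.T) atTop := by
  have hsub : Tendsto (fun t => S.T - t) (𝓝[<] S.T) (𝓝[>] 0) := by
    refine tendsto_nhdsWithin_iff.2 ⟨?_, ?_⟩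
    · simpa using ((continuous_sub_left S.T).tendsto S.T).mono_left nhdsWithin_le_nhds
    · filter_upwards [self_mem_nhdsWithin] with t ht using sub_pos.2 (Set.mem_Iio.1 ht)
  refine (hsub.inv_tendsto_nhdsGT_zero.const_mul_atTop (div_pos (qDeriv_pos (S.p₀_pos S.y₀))
    (abs_pos.2 (mul_ne_zero hχ hμ)))).congr' ?_
  filter_upwards [Ioo_mem_nhdsLT S.T_pos] with t ht
  exact (S.abs_deriv_ρ_char ⟨ht.1.le, ht.2⟩).symm

end BurgersData

lemma exists_burgersData (x₀ : ℝ) {r : ℝ} (hr : 0 < r) :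
    ∃ S : BurgersData, ∀ t ∈ Set.Ico 0 S.T, S.char t S.y₀ ∈ Metric.ball x₀ r := by
  let f : ContDiffBump x₀ := ⟨r / 8, r / 4, by positivity, by linarith⟩
  obtain ⟨y₀, hy₀, hslope, hmin⟩ := f.exists_deriv_le
  have hderiv : deriv (fun y => 1 + f y) = deriv f := funext fun _ => deriv_const_add 1
  let S : BurgersData :=
    { p₀ := fun y => 1 + f y
      y₀ := y₀
      contDiff := contDiff_const.add f.contDiff
      one_le := fun y => le_add_of_nonneg_right f.nonneg
      le_two := fun y => by linarith [f.le_one (x := y)]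
      hasCompactSupport := by simpa using f.hasCompactSupport
      deriv_le := by rw [hderiv]; exact hmin
      deriv_neg := by rw [hderiv]; exact hslope.trans_lt (by simp [f.rOut_pos]) }
  refine ⟨S, fun t ht => ?_⟩
  have hT : S.T ≤ r / 4 :=
    S.T_le (by positivity) (show deriv (fun y => 1 + f y) y₀ ≤ _ by rw [hderiv]; exact hslope)
  have hchar := S.char_y₀_mem_Icc ht
  rw [Metric.mem_closedBall, Real.dist_eq, abs_le] at hy₀
  rw [Metric.mem_ball, Real.dist_eq, abs_lt]
  constructor <;> linarith [hchar.1, hchar.2, hy₀.1, hy₀.2, show f.rOut = r / 4 from rfl]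

end

end KellerSegel

open KellerSegel

theorem finite_time_blowup_in_prescribed_interval
    (χ μ : ℝ) (hχ : 0 < χ) (hμ : 0 < μ)
    (I : Set ℝ) (hIopen : IsOpen I) (hIne : I.Nonempty) :
    ∃ Tstar : ℝ, 0 < Tstar ∧ ∃ ρ₀ c₀ : ℝ → ℝ,
      -- smooth bounded initial data with positive constant lower bounds and
      -- square-integrable derivatives of all orders `k ≥ 1`
      ContDiff ℝ (⊤ : ℕ∞) ρ₀ ∧ ContDiff ℝ (⊤ : ℕ∞) c₀ ∧
      (∃ M : ℝ, ∀ x, |ρ₀ x| ≤ M ∧ |c₀ x| ≤ M) ∧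
      (∃ β₁ β₂ : ℝ, 0 < β₁ ∧ 0 < β₂ ∧ ∀ x, β₁ ≤ ρ₀ x ∧ β₂ ≤ c₀ x) ∧
      (∀ k : ℕ, 1 ≤ k → Integrable (fun x => (iteratedDeriv k ρ₀ x) ^ 2) ∧
        Integrable (fun x => (iteratedDeriv k c₀ x) ^ 2)) ∧
      ∃ ρ c : ℝ → ℝ → ℝ,
        IsClassicalSolution1D χ μ ρ c (Set.Ico 0 Tstar) ∧
        (∀ x, ρ x 0 = ρ₀ x ∧ c x 0 = c₀ x) ∧
        -- `ρ`, `c`, `∂ₓc` and `∂ₓ log c` stay uniformly bounded up to time `T*`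
        (∃ M : ℝ, ∀ x : ℝ, ∀ t ∈ Set.Ico (0:ℝ) Tstar,
          |ρ x t| + |c x t| + |deriv (fun y => c y t) x| +
            |deriv (fun y => Real.log (c y t)) x| ≤ M) ∧
        -- `‖∂ₓρ(·,t)‖_{L^∞(I)} + ‖∂ₓₓc(·,t)‖_{L^∞(I)} → ∞` as `t → T*`
        (∀ M : ℝ, ∀ᶠ t in 𝓝[<] Tstar, ∃ x ∈ I,
          M < |deriv (fun y => ρ y t) x| + |deriv (deriv (fun y => c y t)) x|) := by
  obtain ⟨x₀, hx₀⟩ := hIne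
  obtain ⟨r, hr, hball⟩ := Metric.isOpen_iff.1 hIopen x₀ hx₀
  obtain ⟨S, hS⟩ := exists_burgersData x₀ hr
  have hχμ := mul_pos hχ hμ
  refine ⟨S.T, S.T_pos, S.ρ₀ χ μ, S.c₀ χ, S.contDiff_ρ₀, S.contDiff_c₀,
    S.exists_bound_initial hχ hμ, ⟨_, _, one_div_pos.2 hχμ, Real.exp_pos _,
      fun x => ⟨S.one_div_le_ρ₀ hχμ x, S.exp_neg_le_c₀ hχ x⟩⟩,
    fun k hk => ⟨integrable_sq_iteratedDeriv_of_hasCompactSupport_deriv S.contDiff_ρ₀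
        S.hasCompactSupport_deriv_ρ₀ hk,
      integrable_sq_iteratedDeriv_of_hasCompactSupport_deriv S.contDiff_c₀
        S.hasCompactSupport_deriv_c₀ hk⟩,
    S.ρ χ μ, S.c χ, S.isClassicalSolution1D hχ.ne' hμ.ne', fun x => ⟨S.ρ_zero x, S.c_zero x⟩,
    S.exists_bound hχ hμ, fun M => ?_⟩
  filter_upwards [(S.tendsto_abs_deriv_ρ hχ.ne' hμ.ne').eventually_gt_atTop M,
    Ioo_mem_nhdsLT S.T_pos] with t hM ht
  exact ⟨_, hball (hS t ⟨ht.1.le, ht.2⟩), hM.trans_le (le_add_of_nonneg_right (abs_nonneg _))⟩
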